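/- arXiv:2111.13561 — 5 statements merged into one kernel-verified Lean document; each statement's English description precedes it below -/
import Mathlib

section
/- Let A be an inverse automaton over an alphabet A (deterministic, involutive, trim, with partial transition function δ) with finite state set Q which is not complete. Then there exists a word w over the alphabet Ã = A ∪ A⁻¹ such that w cannot be read from any state of A, i.e., the partial transformation δ_w is the empty transformation. -/
/-
Fix a state `q₀` and a letter `x₀` that cannot be read from it. By trimness every state `p`
reaches `q₀` by some word `u`, so `u x₀` cannot be read from `p`. Killing the finitely many
states one at a time, and appending to the current word a word that kills the image of the
next still-living state, yields a single word that is readable from no state.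
-/

/-- Reading a word over `Ã = A × Bool` (letter `(a, true)` is `a`, `(a, false)` is `a⁻¹`)
from a state of a partial deterministic automaton. -/
def readWord {Q A : Type} (δ : Q → A × Bool → Option Q) : Q → List (A × Bool) → Option Q
  | q, [] => some q
  | q, x :: w =>
    match δ q x with
    | none => none
    | some q' => readWord δ q' w

section readWord

variable {Q A : Type} (δ : Q → A × Bool → Option Q)

theorem readWord_append (q : Q) (w w' : List (A × Bool)) :
    readWord δ q (w ++ w') = (readWord δ q w).bind (fun p => readWord δ p w') := by
  induction w generalizing q with
  | nil => rfl
  | cons x t ih =>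
    simp only [List.cons_append, readWord]
    cases δ q x with
    | none => rfl
    | some p => exact ih p

theorem readWord_append_eq_none {q : Q} {w : List (A × Bool)} (h : readWord δ q w = none)
    (w' : List (A × Bool)) : readWord δ q (w ++ w') = none := by
  rw [readWord_append, h, Option.bind_none]

theorem readWord_append_singleton_eq_none {q q₀ : Q} {u : List (A × Bool)} {x₀ : A × Bool}
    (hu : readWord δ q u = some q₀) (hx₀ : δ q₀ x₀ = none) : readWord δ q (u ++ [x₀]) = none := by
  simp only [readWord_append, hu, Option.bind_some, readWord, hx₀]

theorem exists_readWord_eq_none_of_trim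
    (htrim : ∀ p q : Q, ∃ w : List (A × Bool), readWord δ p w = some q)
    {q₀ : Q} {x₀ : A × Bool} (hx₀ : δ q₀ x₀ = none) (p : Q) :
    ∃ w : List (A × Bool), readWord δ p w = none :=
  let ⟨u, hu⟩ := htrim p q₀
  ⟨u ++ [x₀], readWord_append_singleton_eq_none δ hu hx₀⟩

theorem exists_forall_readWord_eq_none
    (hkill : ∀ p : Q, ∃ w : List (A × Bool), readWord δ p w = none) (s : Finset Q) :
    ∃ w : List (A × Bool), ∀ q ∈ s, readWord δ q w = none := by
  induction s using Finset.cons_induction with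
  | empty => exact ⟨[], by simp⟩
  | cons q s _ ih =>
    obtain ⟨w, hw⟩ := ih
    cases hq : readWord δ q w with
    | none => exact ⟨w, by simpa [hq] using hw⟩
    | some p =>
      obtain ⟨u, hu⟩ := hkill p
      refine ⟨w ++ u, ?_⟩
      simp only [Finset.mem_cons, forall_eq_or_imp]
      refine ⟨by rw [readWord_append, hq, Option.bind_some, hu], fun q' hq' => ?_⟩
      exact readWord_append_eq_none δ (hw q' hq') u

end readWord

theorem stmt_4_general {A Q : Type} [Fintype Q] (δ : Q → A × Bool → Option Q)
    (htrim : ∀ p q : Q, ∃ w : List (A × Bool), readWord δ p w = some q)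
    (hincomplete : ∃ (q : Q) (x : A × Bool), δ q x = none) :
    ∃ w : List (A × Bool), ∀ q : Q, readWord δ q w = none := by
  obtain ⟨q₀, x₀, hx₀⟩ := hincomplete
  obtain ⟨w, hw⟩ := exists_forall_readWord_eq_none δ
    (exists_readWord_eq_none_of_trim δ htrim hx₀) Finset.univ
  exact ⟨w, fun q => hw q (Finset.mem_univ q)⟩

/-- A finite inverse automaton (involutive, deterministic, trim) that is not
complete admits a word over `Ã` that cannot be read from any state. -/
theorem stmt_4 {A Q : Type} [Fintype Q] (δ : Q → A × Bool → Option Q)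
    (hinv : ∀ (p q : Q) (a : A) (b : Bool), δ p (a, b) = some q ↔ δ q (a, !b) = some p)
    (htrim : ∀ p q : Q, ∃ w : List (A × Bool), readWord δ p w = some q)
    (hincomplete : ∃ (q : Q) (x : A × Bool), δ q x = none) :
    ∃ w : List (A × Bool), ∀ q : Q, readWord δ q w = none :=
  stmt_4_general δ htrim hincomplete
end

section
/- Let K be a finite-index subgroup of the free group F_A with complete Stallings automaton S(K) = (Q, A, δ, q₀), and let (u_n)_n be a sequence of elements of a free group F_X on variables X. Then the transition group M(K) ultimately satisfies the identities u_n = 1 if and only if there exists p ≥ 1 such that for every group homomorphism ψ : F_X → F_A and all n ≥ p, u_n ψ belongs to K. -/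
/-!
The transition group is the image of `Δ`, so a homomorphism `F_X → M(K)` lifts along `Δ` to
a homomorphism `F_X → F_A`: thus `M(K)` satisfies `w = 1` iff every image of `w` in `F_A` lies
in `ker Δ`. Since the action is transitive with stabilizer `K`, `ker Δ` is the normal core of
`K`, and as the set of images of `w` is closed under conjugation, all of them lie in the
normal core iff all of them lie in `K`.
-/

namespace FreeGroup

variable {X G H : Type*} [Group G] [Group H]

theorem exists_comp_eq_of_surjective {f : G →* H} (hf : Function.Surjective f)
    (φ : FreeGroup X →* H) : ∃ ψ : FreeGroup X →* G, f.comp ψ = φ := by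
  choose s hs using fun x => hf (φ (of x))
  exact ⟨lift s, ext_hom _ _ fun x => by simp [hs]⟩

theorem forall_hom_range_eq_one_iff (f : G →* H) (w : FreeGroup X) :
    (∀ φ : FreeGroup X →* f.range, φ w = 1) ↔ ∀ ψ : FreeGroup X →* G, ψ w ∈ f.ker := by
  constructor
  · intro h ψ
    exact Subtype.ext_iff.mp (h (f.rangeRestrict.comp ψ))
  · intro h φ
    obtain ⟨ψ, rfl⟩ := exists_comp_eq_of_surjective f.rangeRestrict_surjective φ
    exact Subtype.ext (h ψ)

end FreeGroup

theorem Subgroup.forall_hom_mem_normalCore_iff {F G : Type*} [Group F] [Group G]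
    (K : Subgroup G) (w : F) :
    (∀ ψ : F →* G, ψ w ∈ K.normalCore) ↔ ∀ ψ : F →* G, ψ w ∈ K :=
  ⟨fun h ψ => K.normalCore_le (h ψ), fun h ψ b => h ((MulAut.conj b).toMonoidHom.comp ψ)⟩

theorem MonoidHom.ker_eq_normalCore {G Q : Type*} [Group G] {Δ : G →* Equiv.Perm Q} {q₀ : Q}
    {K : Subgroup G} (hconn : ∀ q, ∃ g, Δ g q₀ = q) (hK : ∀ g, g ∈ K ↔ Δ g q₀ = q₀) :
    Δ.ker = K.normalCore := by
  ext g
  rw [MonoidHom.mem_ker]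
  constructor
  · intro h b
    simp [hK, h]
  · intro h
    ext q
    obtain ⟨b, rfl⟩ := hconn q
    simpa [hK, Equiv.Perm.mul_apply, Equiv.symm_apply_eq] using h b⁻¹

theorem stmt_7_general {A X Q : Type} (K : Subgroup (FreeGroup A))
    (Δ : FreeGroup A →* Equiv.Perm Q) (q₀ : Q)
    (hconn : ∀ q : Q, ∃ g : FreeGroup A, Δ g q₀ = q)
    (hK : ∀ g : FreeGroup A, g ∈ K ↔ Δ g q₀ = q₀)
    (u : ℕ → FreeGroup X) :
    (∃ p : ℕ, 1 ≤ p ∧ ∀ n, p ≤ n → ∀ φ : FreeGroup X →* Δ.range, φ (u n) = 1) ↔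
    (∃ p : ℕ, 1 ≤ p ∧ ∀ ψ : FreeGroup X →* FreeGroup A, ∀ n, p ≤ n → ψ (u n) ∈ K) := by
  have identity_iff (n : ℕ) : (∀ φ : FreeGroup X →* Δ.range, φ (u n) = 1) ↔
      ∀ ψ : FreeGroup X →* FreeGroup A, ψ (u n) ∈ K := by
    rw [FreeGroup.forall_hom_range_eq_one_iff, MonoidHom.ker_eq_normalCore hconn hK,
      K.forall_hom_mem_normalCore_iff]
  simp only [identity_iff]
  exact exists_congr fun p => and_congr_right fun _ =>
    ⟨fun h ψ n hn => h n hn ψ, fun h n hn ψ => h ψ n hn⟩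

/-- Let `K ≤ F_A` be of finite index, with complete Stallings automaton
modelled by the transitive action `Δ : F_A →* Perm Q` whose stabilizer of the basepoint
`q₀` is `K`; the transition group `M(K)` is `Δ.range`. For a sequence `(u n)` in a free
group `F_X`, `M(K)` ultimately satisfies the identities `u n = 1` iff there is `p ≥ 1`
such that for every homomorphism `ψ : F_X →* F_A` and all `n ≥ p`, `ψ (u n) ∈ K`. -/
theorem stmt_7 {A X Q : Type} [Fintype Q] (K : Subgroup (FreeGroup A))
    (Δ : FreeGroup A →* Equiv.Perm Q) (q₀ : Q)
    (hconn : ∀ q : Q, ∃ g : FreeGroup A, Δ g q₀ = q)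
    (hK : ∀ g : FreeGroup A, g ∈ K ↔ Δ g q₀ = q₀)
    (u : ℕ → FreeGroup X) :
    (∃ p : ℕ, 1 ≤ p ∧ ∀ n, p ≤ n → ∀ φ : FreeGroup X →* Δ.range, φ (u n) = 1) ↔
    (∃ p : ℕ, 1 ≤ p ∧ ∀ ψ : FreeGroup X →* FreeGroup A, ∀ n, p ≤ n → ψ (u n) ∈ K) :=
  stmt_7_general K Δ q₀ hconn hK u
end

section
/- Let p be a prime and K a finite-index subgroup of the free group F_A. Then the transition group M(K) of the Stallings automaton of K is a p-group if and only if there exists m ≥ 1 such that x^{p^m} ∈ K for all x ∈ F_A. -/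
/-!
The kernel of the action of `F_A` on the cosets of `K` is the normal core of `K`, so `Δ x ^ n = 1`
as soon as every `n`-th power lies in `K`, the set of `n`-th powers being closed under conjugation.
Conversely, a finite `p`-group has exponent dividing some `p ^ n`, and then `x ^ p ^ (n + 1)`
acts trivially, in particular fixes `q₀`.
-/

section TransitiveAction

variable {G Q : Type*} [Group G] {Δ : G →* Equiv.Perm Q} {q₀ : Q}

theorem map_eq_one_of_forall_conj_apply_eq (hconn : ∀ q : Q, ∃ g : G, Δ g q₀ = q) {y : G}
    (hy : ∀ g : G, Δ (g⁻¹ * y * g) q₀ = q₀) : Δ y = 1 := by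
  ext q
  obtain ⟨g, rfl⟩ := hconn q
  simpa only [map_mul, map_inv, Equiv.Perm.mul_apply, Equiv.Perm.inv_eq_iff_eq,
    Equiv.Perm.one_apply] using hy g

theorem map_pow_eq_one_of_forall_pow_apply_eq (hconn : ∀ q : Q, ∃ g : G, Δ g q₀ = q)
    {n : ℕ} (hpow : ∀ x : G, Δ (x ^ n) q₀ = q₀) (x : G) : Δ x ^ n = 1 := by
  rw [← map_pow]
  refine map_eq_one_of_forall_conj_apply_eq hconn fun g => ?_
  have hconj := hpow (g⁻¹ * x * g⁻¹⁻¹)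
  rwa [conj_pow, inv_inv] at hconj

end TransitiveAction

theorem stmt_9_general {A Q : Type} [Fintype Q] (p : ℕ)
    (K : Subgroup (FreeGroup A))
    (Δ : FreeGroup A →* Equiv.Perm Q) (q₀ : Q)
    (hconn : ∀ q : Q, ∃ g : FreeGroup A, Δ g q₀ = q)
    (hK : ∀ g : FreeGroup A, g ∈ K ↔ Δ g q₀ = q₀) :
    IsPGroup p Δ.range ↔ (∃ m : ℕ, 1 ≤ m ∧ ∀ x : FreeGroup A, x ^ p ^ m ∈ K) := by
  constructor
  · intro hpGroup
    obtain ⟨n, hn⟩ := hpGroup.exists_exponent_dvd_pow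
    refine ⟨n + 1, Nat.le_add_left 1 n, fun x => (hK _).2 ?_⟩
    have hx : Δ x ^ p ^ n = 1 :=
      congrArg Subtype.val (Monoid.exponent_dvd_iff_forall_pow_eq_one.mp hn ⟨Δ x, x, rfl⟩)
    rw [map_pow, pow_succ, pow_mul, hx, one_pow, Equiv.Perm.one_apply]
  · rintro ⟨m, -, hm⟩ ⟨_, x, rfl⟩
    have hpow : ∀ y, Δ (y ^ p ^ m) q₀ = q₀ := fun y => (hK _).1 (hm y)
    exact ⟨m, Subtype.ext (map_pow_eq_one_of_forall_pow_apply_eq hconn hpow x)⟩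

/-- Let `p` be a prime and `K ≤ F_A` of finite index, with complete
Stallings automaton modelled by the transitive action `Δ : F_A →* Perm Q` whose
stabilizer of the basepoint `q₀` is `K`; the transition group `M(K)` is `Δ.range`.
Then `M(K)` is a `p`-group iff there is `m ≥ 1` with `x ^ (p ^ m) ∈ K` for all `x`. -/
theorem stmt_9 {A Q : Type} [Fintype Q] (p : ℕ) (hp : p.Prime)
    (K : Subgroup (FreeGroup A))
    (Δ : FreeGroup A →* Equiv.Perm Q) (q₀ : Q)
    (hconn : ∀ q : Q, ∃ g : FreeGroup A, Δ g q₀ = q)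
    (hK : ∀ g : FreeGroup A, g ∈ K ↔ Δ g q₀ = q₀) :
    IsPGroup p Δ.range ↔ (∃ m : ℕ, 1 ≤ m ∧ ∀ x : FreeGroup A, x ^ p ^ m ∈ K) :=
  stmt_9_general p K Δ q₀ hconn hK
end

section
/- Let K be a finitely generated subgroup of the free group F_A with Stallings automaton S(K) = (Q, A, δ, q₀), let π be a set of primes, and let Π' be the set of positive integers all of whose prime factors lie outside π. The following are equivalent: (i) every subgroup of the transition monoid M(K) is a π-group; (ii) for all q ∈ Q, all words v over Ã, and all n ∈ Π', if v^n labels a loop at q then v labels a loop at q; (iii) for all x ∈ F_A and all n ∈ Π', x^n ∈ K implies x ∈ K. -/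
/-- The `n`-th power of a word. -/
def wpow {α : Type} (w : List α) (n : ℕ) : List α := (List.replicate n w).flatten

/-- Domain of the partial transformation `δ_w`. -/
def pdom {Q A : Type} (δ : Q → A × Bool → Option Q) (w : List (A × Bool)) : Set Q :=
  {q | (readWord δ q w).isSome}

/-- Image of the partial transformation `δ_w`. -/
def pim {Q A : Type} (δ : Q → A × Bool → Option Q) (w : List (A × Bool)) : Set Q :=
  {q | ∃ p, readWord δ p w = some q}

/-- `n` is a `π'`-number: a positive integer all of whose prime factors lie outside `π`. -/
def IsPiPrimeNumber (π : Set ℕ) (n : ℕ) : Prop :=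
  0 < n ∧ ∀ p : ℕ, p.Prime → p ∣ n → p ∉ π

open FreeGroup

section Powers

variable {α : Type}

@[simp] lemma wpow_zero (v : List α) : wpow v 0 = [] := rfl

lemma wpow_succ (v : List α) (n : ℕ) : wpow v (n + 1) = v ++ wpow v n := by
  simp [wpow, List.replicate_succ]

@[simp] lemma wpow_one (v : List α) : wpow v 1 = v := by simp [wpow]

lemma wpow_add (v : List α) (m n : ℕ) : wpow v (m + n) = wpow v m ++ wpow v n := by
  rw [wpow, List.replicate_add, List.flatten_append]; rfl

lemma wpow_succ' (v : List α) (n : ℕ) : wpow v (n + 1) = wpow v n ++ v := by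
  rw [wpow_add, wpow_one]

lemma wpow_mul (v : List α) (m n : ℕ) : wpow v (m * n) = wpow (wpow v m) n := by
  induction n with
  | zero => rfl
  | succ n ih => rw [Nat.mul_succ, Nat.add_comm, wpow_add, ih, wpow_succ]

lemma invRev_wpow (v : List (α × Bool)) (n : ℕ) : invRev (wpow v n) = wpow (invRev v) n := by
  induction n with
  | zero => rfl
  | succ n ih =>
    rw [wpow_succ, invRev_append, ih, wpow_succ']

end Powers

def IsInverse {Q A : Type} (δ : Q → A × Bool → Option Q) : Prop :=
  ∀ (p q : Q) (a : A) (b : Bool), δ p (a, b) = some q ↔ δ q (a, !b) = some p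

section Reading

variable {Q A : Type} {δ : Q → A × Bool → Option Q}

@[simp] lemma readWord_nil (q : Q) : readWord δ q [] = some q := rfl

lemma readWord_cons_eq_some {p r : Q} {x : A × Bool} {w : List (A × Bool)} :
    readWord δ p (x :: w) = some r ↔ ∃ q, δ p x = some q ∧ readWord δ q w = some r := by
  simp only [readWord]
  cases δ p x <;> simp

lemma readWord_append_eq_some {p r : Q} {u w : List (A × Bool)} :
    readWord δ p (u ++ w) = some r ↔ ∃ q, readWord δ p u = some q ∧ readWord δ q w = some r := by
  induction u generalizing p with
  | nil => simp
  | cons x u ih =>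
    simp only [List.cons_append, readWord_cons_eq_some, ih]
    aesop

lemma readWord_concat_eq_some {p r : Q} {x : A × Bool} {w : List (A × Bool)} :
    readWord δ p (w ++ [x]) = some r ↔ ∃ q, readWord δ p w = some q ∧ δ q x = some r := by
  simp [readWord_append_eq_some, readWord_cons_eq_some]

lemma readWord_of_append_eq_some {p q r : Q} {u w : List (A × Bool)}
    (h : readWord δ p (u ++ w) = some r) (hu : readWord δ p u = some q) :
    readWord δ q w = some r := by
  obtain ⟨q', hu', hw⟩ := readWord_append_eq_some.mp h
  rw [hu, Option.some_inj] at hu'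
  rwa [hu']

lemma exists_readWord_eq_some_of_append {p r : Q} {u w : List (A × Bool)}
    (h : readWord δ p (u ++ w) = some r) : ∃ q, readWord δ p u = some q := by
  obtain ⟨q, hq, -⟩ := readWord_append_eq_some.mp h
  exact ⟨q, hq⟩

lemma exists_readWord_eq_some_of_wpow {p r : Q} {v : List (A × Bool)} {n : ℕ} (hn : 0 < n)
    (h : readWord δ p (wpow v n) = some r) : ∃ q, readWord δ p v = some q := by
  obtain ⟨k, rfl⟩ := Nat.exists_eq_succ_of_ne_zero hn.ne'
  rw [wpow_succ] at h
  exact exists_readWord_eq_some_of_append h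

end Reading

section Inverse

variable {Q A : Type} {δ : Q → A × Bool → Option Q}

lemma readWord_invRev_eq_some (hδ : IsInverse δ) {p q : Q} {w : List (A × Bool)} :
    readWord δ p w = some q ↔ readWord δ q (invRev w) = some p := by
  induction w generalizing p with
  | nil => simp [eq_comm]
  | cons x w ih =>
    obtain ⟨a, b⟩ := x
    rw [invRev_cons, show invRev [(a, b)] = [(a, !b)] from rfl, readWord_concat_eq_some,
      readWord_cons_eq_some]
    simp only [ih, hδ p _ a b]
    exact exists_congr fun r => and_comm

lemma readWord_left_injective (hδ : IsInverse δ) {p p' r : Q} {w : List (A × Bool)}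
    (h : readWord δ p w = some r) (h' : readWord δ p' w = some r) : p = p' := by
  rw [readWord_invRev_eq_some hδ] at h h'
  exact Option.some_inj.mp (h.symm.trans h')

lemma readWord_of_red (hδ : IsInverse δ) {p r : Q} {w w' : List (A × Bool)} (hw : Red w w')
    (h : readWord δ p w = some r) : readWord δ p w' = some r := by
  induction hw with
  | refl => exact h
  | tail _ hstep ih =>
    obtain @⟨L₁, L₂, x, b⟩ := hstep
    obtain ⟨q, hq, hrest⟩ := readWord_append_eq_some.mp ih
    obtain ⟨q₁, hq₁, q₂, hq₂, h₂⟩ := by simpa only [readWord_cons_eq_some] using hrest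
    have : q₂ = q := Option.some_inj.mp (hq₂.symm.trans ((hδ q q₁ x b).mp hq₁))
    exact readWord_append_eq_some.mpr ⟨q, hq, this ▸ h₂⟩

lemma readWord_toWord_mk [DecidableEq A] (hδ : IsInverse δ) {p r : Q} {w : List (A × Bool)}
    (h : readWord δ p w = some r) : readWord δ p (mk w).toWord = some r := by
  rw [toWord_mk]
  exact readWord_of_red hδ reduce.red h

lemma readWord_conj_eq_some (hδ : IsInverse δ) {p q : Q} {s w : List (A × Bool)}
    (hs : readWord δ p s = some q) :
    readWord δ p (s ++ w ++ invRev s) = some p ↔ readWord δ q w = some q := by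
  constructor
  · intro h
    rw [List.append_assoc] at h
    obtain ⟨r, hw, hr⟩ := readWord_append_eq_some.mp (readWord_of_append_eq_some h hs)
    rw [← readWord_invRev_eq_some hδ] at hr
    rwa [← Option.some_inj.mp (hs.symm.trans hr)] at hw
  · intro h
    exact readWord_append_eq_some.mpr
      ⟨q, readWord_append_eq_some.mpr ⟨q, hs, h⟩, (readWord_invRev_eq_some hδ).mp hs⟩

end Inverse

section Periodic

variable {Q A : Type} {δ : Q → A × Bool → Option Q}

lemma readWord_wpow_mul_eq_self {q : Q} {v : List (A × Bool)} {a : ℕ}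
    (h : readWord δ q (wpow v a) = some q) (b : ℕ) : readWord δ q (wpow v (a * b)) = some q := by
  rw [wpow_mul]
  induction b with
  | zero => rfl
  | succ b ih => rw [wpow_succ]; exact readWord_append_eq_some.mpr ⟨q, h, ih⟩

lemma readWord_wpow_gcd_eq_self {q : Q} {v : List (A × Bool)} {a b : ℕ}
    (ha : readWord δ q (wpow v a) = some q) (hb : readWord δ q (wpow v b) = some q) :
    readWord δ q (wpow v (Nat.gcd a b)) = some q := by
  induction a, b using Nat.gcd.induction with
  | H0 b => simpa using hb
  | H1 a b _ ih =>
    rw [Nat.gcd_rec]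
    refine ih ?_ ha
    rw [← Nat.div_add_mod b a, wpow_add] at hb
    exact readWord_of_append_eq_some hb (readWord_wpow_mul_eq_self ha _)

lemma readWord_wpow_sub_eq_self (hδ : IsInverse δ) {q r : Q} {v : List (A × Bool)} {i j : ℕ}
    (hij : i ≤ j) (hi : readWord δ q (wpow v i) = some r) (hj : readWord δ q (wpow v j) = some r) :
    readWord δ q (wpow v (j - i)) = some q := by
  rw [← Nat.sub_add_cancel hij, wpow_add] at hj
  obtain ⟨q', hq', hr⟩ := readWord_append_eq_some.mp hj
  rwa [readWord_left_injective hδ hr hi] at hq'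

lemma exists_readWord_wpow_eq_self [Fintype Q] (hδ : IsInverse δ) {q : Q} {v : List (A × Bool)}
    {k : ℕ} (hk : Fintype.card Q ≤ k) (h : q ∈ pdom δ (wpow v k)) :
    ∃ d, 0 < d ∧ d ≤ Fintype.card Q ∧ readWord δ q (wpow v d) = some q := by
  have hprefix : ∀ i : Fin (Fintype.card Q + 1), ∃ r, readWord δ q (wpow v i) = some r := by
    intro i
    obtain ⟨r, hr⟩ := Option.isSome_iff_exists.mp h
    rw [← Nat.add_sub_cancel' (show (i : ℕ) ≤ k by omega), wpow_add] at hr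
    exact exists_readWord_eq_some_of_append hr
  choose orbit horbit using hprefix
  obtain ⟨i, j, hne, heq⟩ := Fintype.exists_ne_map_eq_of_card_lt orbit (by simp)
  have hi := i.isLt
  have hj := j.isLt
  rcases lt_or_gt_of_ne (Fin.val_ne_of_ne hne) with hlt | hlt
  · exact ⟨j - i, by omega, by omega,
      readWord_wpow_sub_eq_self hδ hlt.le (horbit i) (heq ▸ horbit j)⟩
  · exact ⟨i - j, by omega, by omega,
      readWord_wpow_sub_eq_self hδ hlt.le (horbit j) (heq ▸ horbit i)⟩

lemma pdom_wpow_subset_pim [Fintype Q] (hδ : IsInverse δ) {v : List (A × Bool)} {k : ℕ}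
    (hk : Fintype.card Q ≤ k) : pdom δ (wpow v k) ⊆ pim δ (wpow v k) := by
  intro q hq
  obtain ⟨d, hd, -, hloop⟩ := exists_readWord_wpow_eq_self hδ hk hq
  have hdk := readWord_wpow_mul_eq_self hloop k
  rw [← Nat.sub_add_cancel (Nat.le_mul_of_pos_left k hd), wpow_add] at hdk
  obtain ⟨p, -, hp⟩ := readWord_append_eq_some.mp hdk
  exact ⟨p, hp⟩

lemma pim_eq_pdom_invRev (hδ : IsInverse δ) (w : List (A × Bool)) :
    pim δ w = pdom δ (invRev w) := by
  ext q
  exact (exists_congr fun p => readWord_invRev_eq_some hδ).trans Option.isSome_iff_exists.symm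

lemma pdom_wpow_eq_pim [Fintype Q] (hδ : IsInverse δ) (v : List (A × Bool)) {k : ℕ}
    (hk : Fintype.card Q ≤ k) : pdom δ (wpow v k) = pim δ (wpow v k) := by
  refine (pdom_wpow_subset_pim hδ hk).antisymm ?_
  have := pdom_wpow_subset_pim hδ (v := invRev v) hk
  rwa [← invRev_wpow, ← pim_eq_pdom_invRev hδ, pim_eq_pdom_invRev hδ (invRev (wpow v k)),
    invRev_invRev] at this

lemma pdom_subset_pdom_wpow {w : List (A × Bool)} (hw : pim δ w ⊆ pdom δ w) (k : ℕ) :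
    pdom δ w ⊆ pdom δ (wpow w k) := by
  induction k with
  | zero => intro q _; simp [pdom]
  | succ k ih =>
    intro q hq
    obtain ⟨r, hr⟩ := Option.isSome_iff_exists.mp hq
    obtain ⟨r', hr'⟩ := Option.isSome_iff_exists.mp (ih (hw ⟨q, hr⟩))
    show (readWord δ q (wpow w (k + 1))).isSome
    rw [wpow_succ, Option.isSome_iff_exists]
    exact ⟨r', readWord_append_eq_some.mpr ⟨r, hr, hr'⟩⟩

end Periodic

lemma exists_pi_mul_piPrime_eq (π : Set ℕ) {N : ℕ} (hN : 0 < N) :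
    ∃ s t, s * t = N ∧ (∀ p : ℕ, p.Prime → p ∣ s → p ∈ π) ∧ IsPiPrimeNumber π t := by
  induction N using induction_on_primes with
  | zero => exact absurd hN (lt_irrefl 0)
  | one =>
    exact ⟨1, 1, rfl, fun p hp h => absurd h hp.not_dvd_one, one_pos,
      fun p hp h => absurd h hp.not_dvd_one⟩
  | prime_mul p a hp ih =>
    obtain ⟨s, t, rfl, hs, ht⟩ := ih (Nat.pos_of_mul_pos_left hN)
    by_cases hpπ : p ∈ π
    · refine ⟨p * s, t, by ring, fun q hq hdvd => ?_, ht⟩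
      rcases (Nat.Prime.dvd_mul hq).mp hdvd with h | h
      · rwa [(Nat.prime_dvd_prime_iff_eq hq hp).mp h]
      · exact hs q hq h
    · refine ⟨s, p * t, by ring, hs, Nat.mul_pos hp.pos ht.1, fun q hq hdvd => ?_⟩
      rcases (Nat.Prime.dvd_mul hq).mp hdvd with h | h
      · rwa [(Nat.prime_dvd_prime_iff_eq hq hp).mp h]
      · exact ht.2 q hq h

lemma IsPiPrimeNumber.coprime {π : Set ℕ} {n m : ℕ} (hn : IsPiPrimeNumber π n)
    (hm : ∀ p : ℕ, p.Prime → p ∣ m → p ∈ π) : n.Coprime m :=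
  Nat.coprime_of_dvd fun p hp hpn hpm => hn.2 p hp hpn (hm p hp hpm)

section Conditions

variable {Q A : Type}

/-- `pdom δ w = pim δ w` says that `δ_w` lies in a subgroup of the transition monoid, whose
identity is then the identity on `pdom δ w`; so this is condition (i): every such `δ_w` has
order a `π`-number. -/
def HClassesArePiGroups (δ : Q → A × Bool → Option Q) (π : Set ℕ) : Prop :=
  ∀ w : List (A × Bool), pdom δ w = pim δ w →
    ∃ m : ℕ, 0 < m ∧ (∀ p : ℕ, p.Prime → p ∣ m → p ∈ π) ∧
      ∀ q ∈ pdom δ w, readWord δ q (wpow w m) = some q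

def LoopsPiPrimeRootClosed (δ : Q → A × Bool → Option Q) (π : Set ℕ) : Prop :=
  ∀ (q : Q) (v : List (A × Bool)) (n : ℕ), IsPiPrimeNumber π n →
    readWord δ q (wpow v n) = some q → readWord δ q v = some q

def IsPiPrimeRootClosed {G : Type*} [Group G] (K : Subgroup G) (π : Set ℕ) : Prop :=
  ∀ (x : G) (n : ℕ), IsPiPrimeNumber π n → x ^ n ∈ K → x ∈ K

variable {δ : Q → A × Bool → Option Q} {π : Set ℕ}

theorem HClassesArePiGroups.loopsPiPrimeRootClosed [Fintype Q] (hδ : IsInverse δ)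
    (h : HClassesArePiGroups δ π) : LoopsPiPrimeRootClosed δ π := by
  intro q v n hn hloop
  set j := n * Fintype.card Q + 1
  have hj : Fintype.card Q ≤ j := Nat.le_succ_of_le (Nat.le_mul_of_pos_left _ hn.1)
  have hq : q ∈ pdom δ (wpow v j) := by
    obtain ⟨r, hr⟩ := exists_readWord_eq_some_of_wpow hn.1 hloop
    show (readWord δ q (wpow v (n * Fintype.card Q + 1))).isSome
    rw [wpow_add, wpow_one, Option.isSome_iff_exists]
    exact ⟨r, readWord_append_eq_some.mpr ⟨q, readWord_wpow_mul_eq_self hloop _, hr⟩⟩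
  obtain ⟨m, -, hm, hfix⟩ := h _ (pdom_wpow_eq_pim hδ v hj)
  have hjm : readWord δ q (wpow v (j * m)) = some q := by
    rw [wpow_mul]
    exact hfix q hq
  have hcop : n.Coprime (j * m) :=
    Nat.Coprime.mul_right (by simp [j]) (hn.coprime hm)
  simpa [hcop.gcd_eq_one] using readWord_wpow_gcd_eq_self hloop hjm

theorem LoopsPiPrimeRootClosed.hClassesArePiGroups [Fintype Q] (hδ : IsInverse δ)
    (h : LoopsPiPrimeRootClosed δ π) : HClassesArePiGroups δ π := by
  intro w hw
  have hfix : ∀ q ∈ pdom δ w, readWord δ q (wpow w (Fintype.card Q).factorial) = some q := by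
    intro q hq
    obtain ⟨d, hd, hdc, hloop⟩ :=
      exists_readWord_wpow_eq_self hδ le_rfl (pdom_subset_pdom_wpow hw.ge _ hq)
    obtain ⟨e, he⟩ := Nat.dvd_factorial hd hdc
    rw [he]
    exact readWord_wpow_mul_eq_self hloop e
  obtain ⟨s, t, hst, hs, ht⟩ := exists_pi_mul_piPrime_eq π (Nat.factorial_pos (Fintype.card Q))
  refine ⟨s, Nat.pos_of_mul_pos_right (hst ▸ Nat.factorial_pos _), hs, fun q hq => ?_⟩
  refine h q _ t ht ?_
  rw [← wpow_mul, hst]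
  exact hfix q hq

lemma mk_append_append_invRev (s w : List (A × Bool)) :
    mk (s ++ w ++ invRev s) = mk s * mk w * (mk s)⁻¹ := by
  rw [← mul_mk, ← mul_mk, inv_mk]

theorem LoopsPiPrimeRootClosed.isPiPrimeRootClosed [DecidableEq A] (hδ : IsInverse δ)
    {K : Subgroup (FreeGroup A)} {q₀ : Q}
    (hK : ∀ x : FreeGroup A, x ∈ K ↔ readWord δ q₀ x.toWord = some q₀)
    (h : LoopsPiPrimeRootClosed δ π) : IsPiPrimeRootClosed K π := by
  intro x n hn hxn
  set u := reduceCyclically.conjugator x.toWord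
  set c := reduceCyclically x.toWord
  have hpow : (x ^ n).toWord = u ++ wpow c n ++ invRev u := by
    rw [toWord_pow, reduceCyclically.reduce_flatten_replicate isReduced_toWord, if_neg hn.1.ne']
    rfl
  rw [hK, hpow] at hxn
  obtain ⟨p, hu⟩ := exists_readWord_eq_some_of_append (List.append_assoc _ _ _ ▸ hxn)
  rw [hK, ← reduceCyclically.conj_conjugator_reduceCyclically x.toWord,
    readWord_conj_eq_some hδ hu]
  exact h p c n hn ((readWord_conj_eq_some hδ hu).mp hxn)

theorem IsPiPrimeRootClosed.loopsPiPrimeRootClosed [DecidableEq A] (hδ : IsInverse δ)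
    {K : Subgroup (FreeGroup A)} {q₀ : Q}
    (hconn : ∀ q : Q, ∃ w : List (A × Bool), readWord δ q₀ w = some q)
    (hK : ∀ x : FreeGroup A, x ∈ K ↔ readWord δ q₀ x.toWord = some q₀)
    (h : IsPiPrimeRootClosed K π) : LoopsPiPrimeRootClosed δ π := by
  intro q v n hn hloop
  obtain ⟨s, hs⟩ := hconn q
  set g := mk s * mk v * (mk s)⁻¹
  have hgn : g ^ n ∈ K := by
    have hmk : mk (s ++ wpow v n ++ invRev s) = g ^ n := by
      rw [mk_append_append_invRev, conj_pow, pow_mk]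
      rfl
    rw [hK, ← hmk]
    exact readWord_toWord_mk hδ ((readWord_conj_eq_some hδ hs).mpr hloop)
  have hg : readWord δ q (invRev s ++ g.toWord ++ s) = some q := by
    have := (readWord_conj_eq_some hδ ((readWord_invRev_eq_some hδ).mp hs)).mpr
      ((hK g).mp (h g n hn hgn))
    rwa [invRev_invRev] at this
  have hmk : mk (invRev s ++ g.toWord ++ s) = mk v := by
    rw [← mul_mk, ← mul_mk, mk_toWord, ← inv_mk]
    simp only [g]
    group
  obtain ⟨r, hr⟩ := exists_readWord_eq_some_of_wpow hn.1 hloop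
  have hvq := readWord_toWord_mk hδ hg
  rw [hmk] at hvq
  rwa [Option.some_inj.mp ((readWord_toWord_mk hδ hr).symm.trans hvq)] at hr

end Conditions

theorem stmt_11_general {A Q : Type} [DecidableEq A] [Fintype Q]
    (K : Subgroup (FreeGroup A)) (δ : Q → A × Bool → Option Q) (q₀ : Q)
    (π : Set ℕ)
    (hinv : ∀ (p q : Q) (a : A) (b : Bool), δ p (a, b) = some q ↔ δ q (a, !b) = some p)
    (hconn : ∀ q : Q, ∃ w : List (A × Bool), readWord δ q₀ w = some q)
    (hlink : ∀ w : List (A × Bool), FreeGroup.reduce w = w →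
      (FreeGroup.mk w ∈ K ↔ readWord δ q₀ w = some q₀)) :
    List.TFAE
      [∀ w : List (A × Bool), pdom δ w = pim δ w →
          ∃ m : ℕ, 0 < m ∧ (∀ p : ℕ, p.Prime → p ∣ m → p ∈ π) ∧
            ∀ q ∈ pdom δ w, readWord δ q (wpow w m) = some q,
       ∀ (q : Q) (v : List (A × Bool)) (n : ℕ), IsPiPrimeNumber π n →
          readWord δ q (wpow v n) = some q → readWord δ q v = some q,
       ∀ (x : FreeGroup A) (n : ℕ), IsPiPrimeNumber π n →
          x ^ n ∈ K → x ∈ K] := by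
  have hK : ∀ x : FreeGroup A, x ∈ K ↔ readWord δ q₀ x.toWord = some q₀ := fun x => by
    rw [← hlink _ (reduce_toWord x), mk_toWord]
  tfae_have 1 → 2 := HClassesArePiGroups.loopsPiPrimeRootClosed hinv
  tfae_have 2 → 1 := LoopsPiPrimeRootClosed.hClassesArePiGroups hinv
  tfae_have 2 → 3 := LoopsPiPrimeRootClosed.isPiPrimeRootClosed hinv hK
  tfae_have 3 → 2 := IsPiPrimeRootClosed.loopsPiPrimeRootClosed hinv hconn hK
  tfae_finish

/-- For the Stallings automaton `S(K) = (Q, A, δ, q₀)` of a f.g. subgroup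
`K ≤ F_A` and a set `π` of primes, TFAE: (i) every group `H`-class of `M(K)` is a
`π`-group (every `δ_w` with `dom δ_w = im δ_w` has a power `δ_{w^m}`, `m` a `π`-number,
fixing its domain pointwise); (ii) for every state `q`, word `v` and `π'`-number `n`,
if `v^n` labels a loop at `q` then so does `v`; (iii) for every `x ∈ F_A` and
`π'`-number `n`, `x^n ∈ K` implies `x ∈ K`. -/
theorem stmt_11 {A Q : Type} [DecidableEq A] [Fintype Q]
    (K : Subgroup (FreeGroup A)) (δ : Q → A × Bool → Option Q) (q₀ : Q)
    (π : Set ℕ) (hπ : ∀ p ∈ π, Nat.Prime p)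
    (hinv : ∀ (p q : Q) (a : A) (b : Bool), δ p (a, b) = some q ↔ δ q (a, !b) = some p)
    (hconn : ∀ q : Q, ∃ w : List (A × Bool), readWord δ q₀ w = some q)
    (hdeg : ∀ q : Q, q ≠ q₀ → 2 ≤ {x : A × Bool | (δ q x).isSome}.ncard)
    (hlink : ∀ w : List (A × Bool), FreeGroup.reduce w = w →
      (FreeGroup.mk w ∈ K ↔ readWord δ q₀ w = some q₀)) :
    List.TFAE
      [∀ w : List (A × Bool), pdom δ w = pim δ w →
          ∃ m : ℕ, 0 < m ∧ (∀ p : ℕ, p.Prime → p ∣ m → p ∈ π) ∧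
            ∀ q ∈ pdom δ w, readWord δ q (wpow w m) = some q,
       ∀ (q : Q) (v : List (A × Bool)) (n : ℕ), IsPiPrimeNumber π n →
          readWord δ q (wpow v n) = some q → readWord δ q v = some q,
       ∀ (x : FreeGroup A) (n : ℕ), IsPiPrimeNumber π n →
          x ^ n ∈ K → x ∈ K] :=
  stmt_11_general K δ q₀ π hinv hconn hlink
end

section
/- Let A' = (P', A, λ', q₀) be a finite inverse automaton with basepoint q₀, and let A = (P, A, λ, q₀) be the subautomaton obtained by deleting a vertex p' ≠ q₀ of outdegree 1 (together with its incident edge pair). Then every group H-class of the transition monoid M(A) divides (is a homomorphic image of a subgroup of) some group H-class of M(A'). -/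
/-- The partial transformation `δ_w` as an element of `Function.End (Option Q)`. -/
def ptrans {Q A : Type} (δ : Q → A × Bool → Option Q) (w : List (A × Bool)) :
    Function.End (Option Q) :=
  fun oq => oq.bind fun q => readWord δ q w

/-- The subautomaton on states `Q` obtained from an automaton on `Option Q` by deleting
the vertex `none` (transitions into `none` become undefined). -/
def delSub {Q A : Type} (δ' : Option Q → A × Bool → Option (Option Q)) :
    Q → A × Bool → Option Q :=
  fun q x => (δ' (some q) x).bind id

/-!
Let `D` be the domain of the idempotent `δ_w`. Among the words permuting `D` in `A`, choose `u₀`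
whose domain `E` in `A'` has the fewest elements. Since these words are closed under products and
formal inverses, and `u₀ u₀⁻¹ u u⁻¹` acts on `A'` as `1_{E ∩ dom' u}`, minimality gives
`E ⊆ dom' u` for all of them. Hence, with `v = u₀ u₀⁻¹`, every such `u` yields `v u v`, which
permutes `E` in `A'` and acts like `u` in `A`. The words permuting both `D` in `A` and `E` in `A'`
form a subgroup of the `H`-class of `1_E` in `M(A')`, and restricting their action to `D` maps it
onto the `H`-class of `1_D` in `M(A)`.
-/

theorem exists_subgroup_forall_mem_iff_of_mul_injective {G M : Type*} [Group G] [Mul M]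
    {f : G → M} (hf : ∀ g h, f (g * h) = f g * f h) (hfi : Function.Injective f)
    {T : Set M} (hTf : T ⊆ Set.range f) (hne : T.Nonempty)
    (hmul : ∀ x ∈ T, ∀ y ∈ T, x * y ∈ T)
    (hidem : ∀ x ∈ T, ∃ y ∈ T, IsIdempotentElem (y * x)) :
    ∃ S : Subgroup G, ∀ g, g ∈ S ↔ f g ∈ T := by
  -- the only idempotent of a group is `1`, and `f` reflects idempotents
  have left_inv : ∀ a, f a ∈ T → ∃ b, f b ∈ T ∧ b * a = 1 := by
    intro a ha
    obtain ⟨_, hyT, hy⟩ := hidem _ ha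
    obtain ⟨b, rfl⟩ := hTf hyT
    refine ⟨b, hyT, ?_⟩
    rw [IsIdempotentElem, ← hf, ← hf] at hy
    exact mul_eq_left.mp (hfi hy)
  refine ⟨{ carrier := f ⁻¹' T
            mul_mem' := fun ha hb => by rw [Set.mem_preimage, hf]; exact hmul _ ha _ hb
            one_mem' := ?_
            inv_mem' := ?_ }, fun _ => Iff.rfl⟩
  · obtain ⟨_, hxT⟩ := hne
    obtain ⟨a, rfl⟩ := hTf hxT
    obtain ⟨b, hbT, hba⟩ := left_inv a hxT
    have := hmul _ hbT _ hxT
    rwa [← hf, hba] at this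
  · intro a ha
    obtain ⟨b, hbT, hba⟩ := left_inv a ha
    rwa [← eq_inv_of_mul_eq_one_left hba]

theorem exists_surjective_monoidHom_of_mul_injective {G G' M : Type*} [Group G] [Group G']
    [Mul M] {f : G → M} (hf : ∀ g h, f (g * h) = f g * f h) (hfi : Function.Injective f)
    (S : Subgroup G') (ψ : G' → M) (hψ : ∀ s ∈ S, ψ s ∈ Set.range f)
    (hψmul : ∀ s ∈ S, ∀ t ∈ S, ψ (s * t) = ψ s * ψ t) (hsurj : ∀ g, ∃ s ∈ S, ψ s = f g) :
    ∃ h : S →* G, Function.Surjective h := by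
  have hfψ : ∀ s : S, f (Function.invFun f (ψ s)) = ψ s :=
    fun s => Function.invFun_eq (hψ s s.2)
  refine ⟨MonoidHom.mk' (fun s => Function.invFun f (ψ s)) fun s t => hfi ?_, fun g => ?_⟩
  · rw [hf, hfψ, hfψ, hfψ, Subgroup.coe_mul, hψmul _ s.2 _ t.2]
  · obtain ⟨s, hs, hψs⟩ := hsurj g
    exact ⟨⟨s, hs⟩, hfi (by rw [MonoidHom.mk'_apply, hfψ]; exact hψs)⟩

namespace InverseAutomaton

variable {Q A : Type}

def IsInvolutive (δ : Q → A × Bool → Option Q) : Prop :=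
  ∀ (p q : Q) (a : A) (b : Bool), δ p (a, b) = some q ↔ δ q (a, !b) = some p

def wordInv (u : List (A × Bool)) : List (A × Bool) :=
  (u.map fun x => (x.1, !x.2)).reverse

open Classical in
noncomputable def partialId (S : Set Q) : Function.End (Option Q) :=
  fun oq => oq.bind fun q => if q ∈ S then some q else none

/-- In an inverse monoid of partial injections, `δ_u` is `H`-related to the idempotent `1_D`
exactly when both its domain and its image are `D`. -/
def IsHWord (δ : Q → A × Bool → Option Q) (D : Set Q) (u : List (A × Bool)) : Prop :=
  pdom δ u = D ∧ pim δ u = D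

def hClass (δ : Q → A × Bool → Option Q) (D : Set Q) : Set (Function.End (Option Q)) :=
  {m | ∃ u, m = ptrans δ u ∧ IsHWord δ D u}

section Automaton

variable {δ : Q → A × Bool → Option Q}

theorem readWord_cons (q : Q) (x : A × Bool) (u : List (A × Bool)) :
    readWord δ q (x :: u) = (δ q x).bind fun q' => readWord δ q' u := by
  cases h : δ q x <;> simp [readWord, h]

theorem readWord_append (q : Q) (u v : List (A × Bool)) :
    readWord δ q (u ++ v) = (readWord δ q u).bind fun q' => readWord δ q' v := by
  induction u generalizing q with
  | nil => rfl
  | cons x u ih => cases h : δ q x <;> simp [readWord_cons, h, ih]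

theorem ptrans_append (u v : List (A × Bool)) :
    ptrans δ (u ++ v) = ptrans δ v * ptrans δ u := by
  funext oq
  cases oq with
  | none => rfl
  | some q =>
    show readWord δ q (u ++ v) = ptrans δ v (readWord δ q u)
    rw [readWord_append]
    cases readWord δ q u <;> rfl

theorem readWord_singleton (q : Q) (x : A × Bool) : readWord δ q [x] = δ q x := by
  cases h : δ q x <;> simp [readWord, h]

theorem mem_pdom {u : List (A × Bool)} {q : Q} :
    q ∈ pdom δ u ↔ ∃ t, readWord δ q u = some t := by
  simp [pdom, Option.isSome_iff_exists]

theorem readWord_eq_none {u : List (A × Bool)} {q : Q} (hq : q ∉ pdom δ u) :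
    readWord δ q u = none := by
  simpa [pdom] using hq

theorem pdom_append_subset (u v : List (A × Bool)) : pdom δ (u ++ v) ⊆ pdom δ u := by
  intro q hq
  obtain ⟨t, ht⟩ := mem_pdom.mp hq
  rw [readWord_append, Option.bind_eq_some_iff] at ht
  obtain ⟨s, hs, -⟩ := ht
  exact mem_pdom.mpr ⟨s, hs⟩

theorem pim_append_subset (u v : List (A × Bool)) : pim δ (u ++ v) ⊆ pim δ v := by
  rintro q ⟨p, hp⟩
  rw [readWord_append, Option.bind_eq_some_iff] at hp
  obtain ⟨t, -, ht⟩ := hp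
  exact ⟨t, ht⟩

theorem pdom_append {u v : List (A × Bool)} (h : pim δ u = pdom δ v) :
    pdom δ (u ++ v) = pdom δ u := by
  refine (pdom_append_subset u v).antisymm fun q hq => ?_
  obtain ⟨t, ht⟩ := mem_pdom.mp hq
  obtain ⟨t', ht'⟩ := mem_pdom.mp (h ▸ ⟨q, ht⟩ : t ∈ pdom δ v)
  exact mem_pdom.mpr ⟨t', by rw [readWord_append, ht, Option.bind_some, ht']⟩

theorem pim_append {u v : List (A × Bool)} (h : pim δ u = pdom δ v) :
    pim δ (u ++ v) = pim δ v := by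
  refine (pim_append_subset u v).antisymm fun t ⟨p, hp⟩ => ?_
  obtain ⟨q, hq⟩ := (h ▸ mem_pdom.mpr ⟨t, hp⟩ : p ∈ pim δ u)
  exact ⟨q, by rw [readWord_append, hq, Option.bind_some, hp]⟩

theorem IsHWord.append {D : Set Q} {u v : List (A × Bool)} (hu : IsHWord δ D u)
    (hv : IsHWord δ D v) : IsHWord δ D (u ++ v) := by
  have h : pim δ u = pdom δ v := hu.2.trans hv.1.symm
  exact ⟨(pdom_append h).trans hu.1, (pim_append h).trans hv.2⟩

theorem partialId_some_of_mem {S : Set Q} {q : Q} (h : q ∈ S) :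
    partialId S (some q) = some q := by
  simp [partialId, h]

theorem partialId_some_of_notMem {S : Set Q} {q : Q} (h : q ∉ S) :
    partialId S (some q) = none := by
  simp [partialId, h]

theorem partialId_mul (S T : Set Q) : partialId T * partialId S = partialId (S ∩ T) := by
  funext oq
  cases oq with
  | none => rfl
  | some q =>
    show partialId T (partialId S (some q)) = _
    by_cases hS : q ∈ S
    · by_cases hT : q ∈ T
      · rw [partialId_some_of_mem hS, partialId_some_of_mem hT,
          partialId_some_of_mem (Set.mem_inter hS hT)]
      · rw [partialId_some_of_mem hS, partialId_some_of_notMem hT,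
          partialId_some_of_notMem fun h => hT h.2]
    · rw [partialId_some_of_notMem hS, partialId_some_of_notMem fun h => hS h.1]
      rfl

theorem pdom_eq_of_ptrans_eq_partialId {u : List (A × Bool)} {S : Set Q}
    (h : ptrans δ u = partialId S) : pdom δ u = S := by
  ext q
  have hq : readWord δ q u = partialId S (some q) := congrFun h (some q)
  by_cases hqS : q ∈ S
  · rw [partialId_some_of_mem hqS] at hq
    exact iff_of_true (mem_pdom.mpr ⟨q, hq⟩) hqS
  · rw [partialId_some_of_notMem hqS] at hq
    exact iff_of_false (by simp [pdom, hq]) hqS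

theorem ptrans_mul_partialId_pdom (u : List (A × Bool)) :
    ptrans δ u * partialId (pdom δ u) = ptrans δ u := by
  funext oq
  cases oq with
  | none => rfl
  | some q =>
    show ptrans δ u (partialId (pdom δ u) (some q)) = _
    by_cases hq : q ∈ pdom δ u
    · rw [partialId_some_of_mem hq]
    · rw [partialId_some_of_notMem hq]
      exact (readWord_eq_none hq).symm

theorem partialId_pim_mul_ptrans (u : List (A × Bool)) :
    partialId (pim δ u) * ptrans δ u = ptrans δ u := by
  funext oq
  cases oq with
  | none => rfl
  | some q =>
    show partialId (pim δ u) (readWord δ q u) = readWord δ q u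
    cases ht : readWord δ q u with
    | none => rfl
    | some t => exact partialId_some_of_mem ⟨q, ht⟩

theorem ptrans_sandwich {D : Set Q} {u v : List (A × Bool)} (hv : ptrans δ v = partialId D)
    (hu : IsHWord δ D u) : ptrans δ (v ++ u ++ v) = ptrans δ u := by
  rw [ptrans_append, ptrans_append, hv, ← hu.1, ptrans_mul_partialId_pdom, hu.1, ← hu.2,
    partialId_pim_mul_ptrans]

section Involutive

variable (hδ : IsInvolutive δ)
include hδ

theorem readWord_wordInv (u : List (A × Bool)) (s t : Q) :
    readWord δ s u = some t ↔ readWord δ t (wordInv u) = some s := by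
  induction u generalizing s with
  | nil => simp [wordInv, readWord, eq_comm]
  | cons x u ih =>
    obtain ⟨a, b⟩ := x
    have hsplit : wordInv ((a, b) :: u) = wordInv u ++ [(a, !b)] := by simp [wordInv]
    rw [hsplit, readWord_cons, readWord_append]
    simp only [readWord_singleton, Option.bind_eq_some_iff, ← ih]
    exact ⟨fun ⟨s₁, h₁, h₂⟩ => ⟨s₁, h₂, (hδ _ _ _ _).mp h₁⟩,
      fun ⟨s₁, h₁, h₂⟩ => ⟨s₁, (hδ _ _ _ _).mpr h₂, h₁⟩⟩

theorem pdom_wordInv (u : List (A × Bool)) : pdom δ (wordInv u) = pim δ u := by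
  ext q
  rw [mem_pdom]
  exact exists_congr fun t => (readWord_wordInv hδ u t q).symm

theorem pim_wordInv (u : List (A × Bool)) : pim δ (wordInv u) = pdom δ u := by
  ext q
  rw [mem_pdom]
  exact exists_congr fun p => (readWord_wordInv hδ u q p).symm

theorem IsHWord.wordInv {D : Set Q} {u : List (A × Bool)} (hu : IsHWord δ D u) :
    IsHWord δ D (wordInv u) :=
  ⟨(pdom_wordInv hδ u).trans hu.2, (pim_wordInv hδ u).trans hu.1⟩

theorem isHWord_append_wordInv (u : List (A × Bool)) :
    IsHWord δ (pdom δ u) (u ++ wordInv u) := by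
  have h : pim δ u = pdom δ (wordInv u) := (pdom_wordInv hδ u).symm
  exact ⟨pdom_append h, (pim_append h).trans (pim_wordInv hδ u)⟩

theorem ptrans_append_wordInv (u : List (A × Bool)) :
    ptrans δ (u ++ wordInv u) = partialId (pdom δ u) := by
  funext oq
  cases oq with
  | none => rfl
  | some q =>
    show readWord δ q (u ++ wordInv u) = _
    rw [readWord_append]
    cases ht : readWord δ q u with
    | none => rw [partialId_some_of_notMem (by simp [pdom, ht])]; rfl
    | some t =>
      rw [partialId_some_of_mem (mem_pdom.mpr ⟨t, ht⟩)]
      exact (readWord_wordInv hδ u q t).mp ht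

end Involutive

theorem exists_pdom_subset [Finite Q] (hδ : IsInvolutive δ) {W : Set (List (A × Bool))}
    (hne : W.Nonempty) (happ : ∀ u ∈ W, ∀ v ∈ W, u ++ v ∈ W)
    (hinv : ∀ u ∈ W, wordInv u ∈ W) : ∃ u₀ ∈ W, ∀ u ∈ W, pdom δ u₀ ⊆ pdom δ u := by
  obtain ⟨u₀, hu₀, hmin⟩ := (measure fun u => (pdom δ u).ncard).wf.has_min W hne
  refine ⟨u₀, hu₀, fun u hu => ?_⟩
  set z := (u₀ ++ wordInv u₀) ++ (u ++ wordInv u)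
  have hz : z ∈ W := happ _ (happ _ hu₀ _ (hinv _ hu₀)) _ (happ _ hu _ (hinv _ hu))
  have hdom : pdom δ z = pdom δ u₀ ∩ pdom δ u := by
    apply pdom_eq_of_ptrans_eq_partialId
    rw [ptrans_append, ptrans_append_wordInv hδ, ptrans_append_wordInv hδ, partialId_mul]
  have heq : pdom δ z = pdom δ u₀ :=
    Set.eq_of_subset_of_ncard_le (hdom ▸ Set.inter_subset_left)
      (not_lt.mp (hmin z hz)) (Set.toFinite _)
  exact Set.inter_eq_left.mp (hdom.symm.trans heq)

end Automaton

theorem exists_subgroup_forall_mem_iff_mem_ptrans_image {δ : Q → A × Bool → Option Q}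
    (hδ : IsInvolutive δ) {G : Type*} [Group G] {f : G → Function.End (Option Q)}
    (hf : ∀ g h, f (g * h) = f g * f h) (hfi : Function.Injective f) {E : Set Q}
    (hfr : Set.range f = hClass δ E) {W : Set (List (A × Bool))} (hWE : ∀ u ∈ W, IsHWord δ E u)
    (hne : W.Nonempty) (happ : ∀ u ∈ W, ∀ v ∈ W, u ++ v ∈ W) (hinv : ∀ u ∈ W, wordInv u ∈ W) :
    ∃ S : Subgroup G, ∀ g, g ∈ S ↔ f g ∈ ptrans δ '' W := by
  refine exists_subgroup_forall_mem_iff_of_mul_injective hf hfi ?_ (hne.image _) ?_ ?_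
  · rintro _ ⟨u, hu, rfl⟩
    exact hfr.symm.subset ⟨u, rfl, hWE u hu⟩
  · rintro _ ⟨u, hu, rfl⟩ _ ⟨v, hv, rfl⟩
    exact ⟨v ++ u, happ v hv u hu, ptrans_append v u⟩
  · rintro _ ⟨u, hu, rfl⟩
    refine ⟨_, ⟨wordInv u, hinv u hu, rfl⟩, ?_⟩
    rw [← ptrans_append, ptrans_append_wordInv hδ, IsIdempotentElem, partialId_mul, Set.inter_self]

theorem exists_sandwich {Q' : Type} [Finite Q'] {δ : Q → A × Bool → Option Q}
    {δ' : Q' → A × Bool → Option Q'} (hδ : IsInvolutive δ) (hδ' : IsInvolutive δ') {D : Set Q}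
    {w : List (A × Bool)} (hw : IsHWord δ D w) :
    ∃ v, IsHWord δ' (pdom δ' v) v ∧ ∀ u, IsHWord δ D u →
      IsHWord δ D (v ++ u ++ v) ∧ IsHWord δ' (pdom δ' v) (v ++ u ++ v) ∧
        ptrans δ (v ++ u ++ v) = ptrans δ u := by
  obtain ⟨u₀, hu₀, hmin⟩ := exists_pdom_subset hδ' (W := {u | IsHWord δ D u}) ⟨w, hw⟩
    (fun _ hu _ hv => hu.append hv) (fun _ hu => hu.wordInv hδ)
  set v := u₀ ++ wordInv u₀
  have hvE := isHWord_append_wordInv hδ' u₀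
  have hvD : IsHWord δ D v := hu₀.append (hu₀.wordInv hδ)
  refine ⟨v, by rwa [hvE.1], fun u hu => ?_⟩
  have hz : IsHWord δ D (v ++ u ++ v) := (hvD.append hu).append hvD
  refine ⟨hz, ?_, ptrans_sandwich (by rw [ptrans_append_wordInv hδ, hu₀.1]) hu⟩
  rw [hvE.1]
  constructor
  · refine (((pdom_append_subset _ _).trans (pdom_append_subset _ _)).trans hvE.1.le).antisymm ?_
    exact hmin _ hz
  · refine ((pim_append_subset _ _).trans hvE.2.le).antisymm ?_
    rw [← pdom_wordInv hδ']
    exact hmin _ (hz.wordInv hδ)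

section Deletion

variable {δ' : Option Q → A × Bool → Option (Option Q)}

theorem delSub_eq_some {q q' : Q} {x : A × Bool} :
    delSub δ' q x = some q' ↔ δ' (some q) x = some (some q') := by
  unfold delSub
  cases δ' (some q) x <;> simp

theorem isInvolutive_delSub (hδ' : IsInvolutive δ') : IsInvolutive (delSub δ') :=
  fun p q a b => by rw [delSub_eq_some, delSub_eq_some, hδ']

theorem readWord_delSub {u : List (A × Bool)} {q q' : Q}
    (h : readWord (delSub δ') q u = some q') : readWord δ' (some q) u = some (some q') := by
  induction u generalizing q with
  | nil =>
    obtain rfl : q = q' := Option.some_injective _ h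
    rfl
  | cons x u ih =>
    rw [readWord_cons, Option.bind_eq_some_iff] at h
    obtain ⟨q₁, hx, hu⟩ := h
    rw [readWord_cons, delSub_eq_some.mp hx, Option.bind_some]
    exact ih hu

open Classical in
noncomputable def restrictOn (D : Set Q) (m : Function.End (Option (Option Q))) :
    Function.End (Option Q) :=
  fun oq => oq.bind fun q => if q ∈ D then (m (some (some q))).bind id else none

theorem restrictOn_ptrans {D : Set Q} {u : List (A × Bool)} (h : pdom (delSub δ') u = D) :
    restrictOn D (ptrans δ' u) = ptrans (delSub δ') u := by
  funext oq
  cases oq with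
  | none => rfl
  | some q =>
    show restrictOn D (ptrans δ' u) (some q) = readWord (delSub δ') q u
    by_cases hq : q ∈ D
    · obtain ⟨q', hq'⟩ := mem_pdom.mp (h ▸ hq)
      simp [restrictOn, hq, ptrans, readWord_delSub hq', hq']
    · simp [restrictOn, hq, readWord_eq_none (h ▸ hq : q ∉ pdom (delSub δ') u)]

end Deletion

end InverseAutomaton

open InverseAutomaton in
theorem stmt_14_general {A Q : Type} [Fintype Q]
    (δ' : Option Q → A × Bool → Option (Option Q))
    (hinv' : ∀ (p q : Option Q) (a : A) (b : Bool),
      δ' p (a, b) = some q ↔ δ' q (a, !b) = some p) :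
    ∀ w : List (A × Bool), pdom (delSub δ') w = pim (delSub δ') w →
      ∃ v : List (A × Bool), pdom δ' v = pim δ' v ∧
        ∀ (G G' : Type) [Group G] [Group G']
          (f : G → Function.End (Option Q)) (f' : G' → Function.End (Option (Option Q))),
          (∀ g h : G, f (g * h) = f g * f h) → Function.Injective f →
          Set.range f = {m | ∃ u, m = ptrans (delSub δ') u ∧
            pdom (delSub δ') u = pdom (delSub δ') w ∧
            pim (delSub δ') u = pdom (delSub δ') w} →
          (∀ g h : G', f' (g * h) = f' g * f' h) → Function.Injective f' →
          Set.range f' = {m | ∃ u, m = ptrans δ' u ∧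
            pdom δ' u = pdom δ' v ∧ pim δ' u = pdom δ' v} →
          ∃ (S : Subgroup G') (h : S →* G), Function.Surjective h := by
  intro w hw
  set D := pdom (delSub δ') w
  have hδ := isInvolutive_delSub hinv'
  have hwD : IsHWord (delSub δ') D w := ⟨rfl, hw.symm⟩
  obtain ⟨v, hvE, hsand⟩ := exists_sandwich hδ hinv' hwD
  refine ⟨v, hvE.1.trans hvE.2.symm, fun G G' _ _ f f' hf hfi hfr hf' hfi' hfr' => ?_⟩
  set E := pdom δ' v
  set W := {u | IsHWord (delSub δ') D u ∧ IsHWord δ' E u}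
  obtain ⟨S, hS⟩ := exists_subgroup_forall_mem_iff_mem_ptrans_image hinv' hf' hfi' hfr' (W := W)
    (fun _ hu => hu.2) ⟨_, (hsand w hwD).1, (hsand w hwD).2.1⟩
    (fun _ hu _ hv => ⟨hu.1.append hv.1, hu.2.append hv.2⟩)
    (fun _ hu => ⟨hu.1.wordInv hδ, hu.2.wordInv hinv'⟩)
  have hψ : ∀ s ∈ S, ∃ u ∈ W, f' s = ptrans δ' u ∧ restrictOn D (f' s) = ptrans (delSub δ') u := by
    intro s hs
    obtain ⟨u, hu, hsu⟩ := (hS s).mp hs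
    exact ⟨u, hu, hsu.symm, by rw [← hsu, restrictOn_ptrans hu.1.1]⟩
  refine ⟨S, exists_surjective_monoidHom_of_mul_injective hf hfi S (restrictOn D ∘ f') ?_ ?_ ?_⟩
  · intro s hs
    obtain ⟨u, hu, -, hψs⟩ := hψ s hs
    exact hfr.symm.subset ⟨u, hψs, hu.1⟩
  · intro s hs t ht
    obtain ⟨us, hus, hfs, -⟩ := hψ s hs
    obtain ⟨ut, hut, hft, -⟩ := hψ t ht
    simp only [Function.comp_apply, hf', hfs, hft, ← ptrans_append, restrictOn_ptrans hus.1.1,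
      restrictOn_ptrans hut.1.1, restrictOn_ptrans (hut.1.append hus.1).1]
  · intro g
    obtain ⟨u, hgu, hu⟩ := hfr.subset (Set.mem_range_self g)
    obtain ⟨hzD, hzE, hzu⟩ := hsand u hu
    obtain ⟨s, hs⟩ := hfr'.symm.subset ⟨_, rfl, hzE⟩
    refine ⟨s, (hS s).mpr ⟨_, ⟨hzD, hzE⟩, hs.symm⟩, ?_⟩
    rw [Function.comp_apply, hs, restrictOn_ptrans hzD.1, hzu, hgu]

/-- Let `A' = (Option Q, A, δ', some q₀)` be a finite inverse automaton
with basepoint `some q₀`, and delete the vertex `none ≠ basepoint`, which has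
outdegree 1, obtaining the subautomaton `A = (Q, A, delSub δ', q₀)`. Then every group
`H`-class of `M(A)` divides (is a homomorphic image of a subgroup of) some group
`H`-class of `M(A')`. Group `H`-classes are represented by abstract groups mapping
multiplicatively and injectively onto them. -/
theorem stmt_14 {A Q : Type} [Fintype Q]
    (δ' : Option Q → A × Bool → Option (Option Q)) (q₀ : Q)
    (hinv' : ∀ (p q : Option Q) (a : A) (b : Bool),
      δ' p (a, b) = some q ↔ δ' q (a, !b) = some p)
    (htrim' : ∀ p : Option Q, ∃ w : List (A × Bool), readWord δ' (some q₀) w = some p)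
    (hdeg1 : {x : A × Bool | (δ' none x).isSome}.ncard = 1) :
    ∀ w : List (A × Bool), pdom (delSub δ') w = pim (delSub δ') w →
      ∃ v : List (A × Bool), pdom δ' v = pim δ' v ∧
        ∀ (G G' : Type) [Group G] [Group G']
          (f : G → Function.End (Option Q)) (f' : G' → Function.End (Option (Option Q))),
          (∀ g h : G, f (g * h) = f g * f h) → Function.Injective f →
          Set.range f = {m | ∃ u, m = ptrans (delSub δ') u ∧
            pdom (delSub δ') u = pdom (delSub δ') w ∧
            pim (delSub δ') u = pdom (delSub δ') w} →
          (∀ g h : G', f' (g * h) = f' g * f' h) → Function.Injective f' →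
          Set.range f' = {m | ∃ u, m = ptrans δ' u ∧
            pdom δ' u = pdom δ' v ∧ pim δ' u = pdom δ' v} →
          ∃ (S : Subgroup G') (h : S →* G), Function.Surjective h :=
  stmt_14_general δ' hinv'
end
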